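/- arXiv:1101.1132 — 3 statements merged into one kernel-verified Lean document; each statement's English description precedes it below -/
import Mathlib

section
/- For every integer n ≥ 0, ∫₀¹ xⁿ E'(x) dx = (π/(2(n+1))) · Γ((n+3)/2)² / (Γ((n+2)/2)·Γ((n+4)/2)). -/
open Real intervalIntegral

noncomputable def ellK (x : ℝ) : ℝ := ∫ θ in (0:ℝ)..(π/2), 1 / Real.sqrt (1 - x^2 * Real.sin θ ^ 2)

noncomputable def ellE (x : ℝ) : ℝ := ∫ θ in (0:ℝ)..(π/2), Real.sqrt (1 - x^2 * Real.sin θ ^ 2)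

noncomputable def ellK' (x : ℝ) : ℝ := ellK (Real.sqrt (1 - x^2))

noncomputable def ellE' (x : ℝ) : ℝ := ellE (Real.sqrt (1 - x^2))

/-!
Substituting `sin u = √(1 - x²) sin θ` turns `E'(x)` into
`∫₀^{arccos x} cos² u / √(cos² u - x²) du`, so the integral is a double integral over the region
`0 < u < π/2`, `0 < x ≤ cos u`. Integrating in `x` first, the substitution `x = cos u · sin t`
gives `cosⁿ⁺² u · Wₙ` with the Wallis integral `Wₙ = ∫₀^{π/2} sinⁿ t dt`, hence the integral equals
`Wₙ Wₙ₊₂`; finally `Wₙ = (√π / 2) Γ((n+1)/2) / Γ((n+2)/2)`.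
-/

open MeasureTheory Set Function

section Fubini

variable {α β : Type*} [MeasurableSpace α] [MeasurableSpace β]
  {μ : Measure α} {ν : Measure β} [SFinite μ] [SFinite ν]

theorem integral_integral_swap_of_nonneg {f : α → β → ℝ}
    (hf : AEStronglyMeasurable (uncurry f) (μ.prod ν)) (hf0 : ∀ a b, 0 ≤ f a b)
    (h_sec : ∀ᵐ b ∂ν, Integrable (fun a => f a b) μ)
    (h_int : Integrable (fun b => ∫ a, f a b ∂μ) ν) :
    ∫ a, ∫ b, f a b ∂ν ∂μ = ∫ b, ∫ a, f a b ∂μ ∂ν := by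
  refine integral_integral_swap ((integrable_prod_iff' hf).2 ⟨h_sec, ?_⟩)
  simpa only [uncurry_apply_pair, Real.norm_of_nonneg (hf0 _ _)] using h_int

theorem setIntegral_setIntegral_swap_of_nonneg {S : Set (α × β)} {A : Set α} {B : Set β}
    {T : α → Set β} {U : β → Set α} (hS : MeasurableSet S) (hA : MeasurableSet A)
    (hB : MeasurableSet B) (hT : ∀ a, MeasurableSet (T a)) (hU : ∀ b, MeasurableSet (U b))
    (hST : ∀ a b, (a, b) ∈ S ↔ a ∈ A ∧ b ∈ T a)
    (hSU : ∀ a b, (a, b) ∈ S ↔ b ∈ B ∧ a ∈ U b)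
    {f : α → β → ℝ} (hf : AEStronglyMeasurable (uncurry f) (μ.prod ν))
    (hf0 : ∀ a b, (a, b) ∈ S → 0 ≤ f a b)
    (h_sec : ∀ b ∈ B, IntegrableOn (fun a => f a b) (U b) μ)
    (h_int : IntegrableOn (fun b => ∫ a in U b, f a b ∂μ) B ν) :
    ∫ a in A, ∫ b in T a, f a b ∂ν ∂μ = ∫ b in B, ∫ a in U b, f a b ∂μ ∂ν := by
  classical
  set F : α → β → ℝ := fun a b => S.indicator (uncurry f) (a, b)
  have hF_left :
      ∀ a, ∫ b, F a b ∂ν = A.indicator (fun a => ∫ b in T a, f a b ∂ν) a := by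
    intro a
    by_cases ha : a ∈ A
    · rw [indicator_of_mem ha, ← MeasureTheory.integral_indicator (hT a)]
      congr 1; ext b
      simp [F, indicator_apply, hST, ha]
    · simp [F, indicator_apply, hST, ha]
  have hF_right : ∀ b, (fun a => F a b) = B.indicator (fun b => (U b).indicator (f · b)) b := by
    intro b; ext a
    by_cases hb : b ∈ B <;> simp [F, indicator_apply, hSU, hb]
  have hF_right_integral :
      ∀ b, ∫ a, F a b ∂μ = B.indicator (fun b => ∫ a in U b, f a b ∂μ) b := by
    intro b
    by_cases hb : b ∈ B <;> simp [hF_right, hb, MeasureTheory.integral_indicator (hU b)]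
  calc ∫ a in A, ∫ b in T a, f a b ∂ν ∂μ = ∫ a, ∫ b, F a b ∂ν ∂μ := by
        simp_rw [hF_left]; rw [MeasureTheory.integral_indicator hA]
    _ = ∫ b, ∫ a, F a b ∂μ ∂ν := by
        refine integral_integral_swap_of_nonneg (hf.indicator hS) (fun a b => ?_) ?_ ?_
        · by_cases h : (a, b) ∈ S
          · simpa [F, indicator_of_mem h] using hf0 a b h
          · simp [F, indicator_of_notMem h]
        · refine ae_of_all _ fun b => ?_
          rw [hF_right]
          by_cases hb : b ∈ B
          · simpa [hb, integrable_indicator_iff (hU b)] using h_sec b hb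
          · simp [hb]
        · simpa only [hF_right_integral, integrable_indicator_iff hB] using h_int
    _ = ∫ b in B, ∫ a in U b, f a b ∂μ ∂ν := by
        simp_rw [hF_right_integral]; rw [MeasureTheory.integral_indicator hB]

end Fubini

noncomputable def wallisIntegral (n : ℕ) : ℝ := ∫ t in (0:ℝ)..π / 2, sin t ^ n

theorem wallisIntegral_add_two (n : ℕ) :
    wallisIntegral (n + 2) = (n + 1) / (n + 2) * wallisIntegral n := by
  simp [wallisIntegral, integral_sin_pow]

theorem wallisIntegral_eq_Gamma (n : ℕ) :
    wallisIntegral n = √π / 2 * Gamma ((n + 1) / 2) / Gamma ((n + 2) / 2) := by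
  induction n using Nat.twoStepInduction with
  | zero =>
    rw [wallisIntegral]
    norm_num [Gamma_one_half_eq]
    rw [div_mul_eq_mul_div, mul_self_sqrt pi_pos.le]
  | one =>
    rw [wallisIntegral]
    norm_num
    rw [show (3 : ℝ) / 2 = 1 / 2 + 1 by norm_num, Gamma_add_one (by norm_num), Gamma_one_half_eq]
    field_simp
  | more n ih _ =>
    rw [wallisIntegral_add_two, ih]
    push_cast
    rw [show ((n : ℝ) + 2 + 1) / 2 = (n + 1) / 2 + 1 by ring,
      show ((n : ℝ) + 2 + 2) / 2 = (n + 2) / 2 + 1 by ring,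
      Gamma_add_one (by positivity), Gamma_add_one (by positivity)]
    have : Gamma ((n + 2) / 2) ≠ 0 := (Gamma_pos_of_pos (by positivity)).ne'
    field_simp

theorem integral_cos_pow_eq_wallisIntegral (n : ℕ) :
    ∫ t in (0:ℝ)..π / 2, cos t ^ n = wallisIntegral n := by
  simpa [wallisIntegral, sin_pi_div_two_sub] using
    integral_comp_sub_left (fun t => sin t ^ n) (π / 2) (a := 0) (b := π / 2)

theorem integral_eq_integral_comp_mul_sin (g : ℝ → ℝ) {c : ℝ} (hc : 0 ≤ c) :
    ∫ x in 0..c, g x = ∫ t in 0..π / 2, g (c * sin t) * (c * cos t) := by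
  have := integral_comp_mul_deriv_of_deriv_nonneg (a := 0) (b := π / 2) (g := g)
    (f := fun t => c * sin t) (f' := fun t => c * cos t) (by fun_prop)
    (fun t _ => (hasDerivAt_sin t).const_mul c) (fun t ht => by
      simp only [pi_div_two_pos.le, min_eq_left, max_eq_right] at ht
      exact mul_nonneg hc (cos_nonneg_of_mem_Icc ⟨by linarith [ht.1, pi_pos], ht.2.le⟩))
  simpa using this.symm

theorem intervalIntegrable_iff_comp_mul_sin (g : ℝ → ℝ) {c : ℝ} (hc : 0 ≤ c) :
    IntervalIntegrable g volume 0 c ↔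
      IntervalIntegrable (fun t => g (c * sin t) * (c * cos t)) volume 0 (π / 2) := by
  have := integrable_comp_mul_deriv_iff_of_deriv_nonneg (a := 0) (b := π / 2) (g := g)
    (f := fun t => c * sin t) (f' := fun t => c * cos t) (by fun_prop)
    (fun t _ => (hasDerivAt_sin t).const_mul c) (fun t ht => by
      simp only [pi_div_two_pos.le, min_eq_left, max_eq_right] at ht
      exact mul_nonneg hc (cos_nonneg_of_mem_Icc ⟨by linarith [ht.1, pi_pos], ht.2.le⟩))
  simpa using this.symm

theorem pow_div_sqrt_comp_mul_sin (n : ℕ) {c : ℝ} (hc : 0 < c) :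
    EqOn (fun t => (c * sin t) ^ n / √(c ^ 2 - (c * sin t) ^ 2) * (c * cos t))
      (fun t => c ^ n * sin t ^ n) (Ioo 0 (π / 2)) := by
  intro t ht
  have hcos : 0 < cos t := cos_pos_of_mem_Ioo ⟨by linarith [ht.1, pi_pos], ht.2⟩
  have hsqrt : √(c ^ 2 - (c * sin t) ^ 2) = c * cos t := by
    rw [← sqrt_sq (by positivity : 0 ≤ c * cos t)]
    congr 1
    linear_combination -c ^ 2 * sin_sq_add_cos_sq t
  dsimp only
  rw [hsqrt, mul_pow]
  field_simp

theorem integral_pow_div_sqrt_sq_sub_sq (n : ℕ) {c : ℝ} (hc : 0 < c) :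
    ∫ x in 0..c, x ^ n / √(c ^ 2 - x ^ 2) = c ^ n * wallisIntegral n := by
  rw [integral_eq_integral_comp_mul_sin _ hc.le,
    integral_congr_Ioo_of_le pi_div_two_pos.le (pow_div_sqrt_comp_mul_sin n hc),
    intervalIntegral.integral_const_mul, wallisIntegral]

theorem intervalIntegrable_pow_div_sqrt_sq_sub_sq (n : ℕ) {c : ℝ} (hc : 0 < c) :
    IntervalIntegrable (fun x => x ^ n / √(c ^ 2 - x ^ 2)) volume 0 c := by
  rw [intervalIntegrable_iff_comp_mul_sin _ hc.le,
    intervalIntegrable_congr_uIoo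
      (by rw [uIoo_of_le pi_div_two_pos.le]; exact pow_div_sqrt_comp_mul_sin n hc)]
  exact (by fun_prop : Continuous fun t => c ^ n * sin t ^ n).intervalIntegrable _ _

theorem cos_sq_div_sqrt_comp_arcsin_mul_deriv {x k θ : ℝ} (hk2 : k ^ 2 = 1 - x ^ 2) (hk0 : 0 < k)
    (hcos : 0 < cos θ) (hks : 0 < 1 - (k * sin θ) ^ 2) :
    cos (arcsin (k * sin θ)) ^ 2 / √(cos (arcsin (k * sin θ)) ^ 2 - x ^ 2)
      * ((√(1 - (k * sin θ) ^ 2))⁻¹ * (k * cos θ)) = √(1 - k ^ 2 * sin θ ^ 2) := by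
  have hcos_arcsin : cos (arcsin (k * sin θ)) ^ 2 = 1 - (k * sin θ) ^ 2 := by
    rw [cos_arcsin, sq_sqrt hks.le]
  have hsqrt : √(cos (arcsin (k * sin θ)) ^ 2 - x ^ 2) = k * cos θ := by
    rw [← sqrt_sq (mul_pos hk0 hcos).le, hcos_arcsin]
    congr 1
    linear_combination (-1 : ℝ) * hk2 - k ^ 2 * sin_sq_add_cos_sq θ
  rw [hsqrt, hcos_arcsin, ← mul_pow]
  field_simp
  exact div_sqrt

theorem ellE'_eq_integral_cos_sq_div_sqrt {x : ℝ} (hx0 : 0 ≤ x) (hx1 : x < 1) :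
    ellE' x = ∫ u in 0..arccos x, cos u ^ 2 / √(cos u ^ 2 - x ^ 2) := by
  set k := √(1 - x ^ 2)
  have hk2 : k ^ 2 = 1 - x ^ 2 := sq_sqrt (by nlinarith)
  have hk0 : 0 < k := sqrt_pos.2 (by nlinarith)
  have hcos : ∀ θ ∈ Ioo 0 (π / 2), 0 < cos θ := fun θ hθ =>
    cos_pos_of_mem_Ioo ⟨by linarith [hθ.1, pi_pos], hθ.2⟩
  have hks : ∀ θ ∈ Ioo 0 (π / 2), 0 < 1 - (k * sin θ) ^ 2 := fun θ hθ => by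
    nlinarith [sin_sq_add_cos_sq θ, hcos θ hθ, sq_nonneg (sin θ), sq_nonneg x]
  have hderiv : ∀ θ ∈ Ioo 0 (π / 2), HasDerivAt (fun θ => arcsin (k * sin θ))
      ((√(1 - (k * sin θ) ^ 2))⁻¹ * (k * cos θ)) θ := fun θ hθ => by
    have := hks θ hθ
    simpa only [one_div, comp_def] using (hasDerivAt_arcsin (by nlinarith) (by nlinarith)).comp θ
      ((hasDerivAt_sin θ).const_mul k)
  have hsubst := integral_comp_mul_deriv_of_deriv_nonneg (a := 0) (b := π / 2)
    (f := fun θ => arcsin (k * sin θ)) (g := fun u => cos u ^ 2 / √(cos u ^ 2 - x ^ 2))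
    (by fun_prop) (by simpa [pi_div_two_pos.le] using hderiv)
    (fun θ hθ => by
      simp only [pi_div_two_pos.le, min_eq_left, max_eq_right] at hθ
      have := hcos θ hθ
      positivity)
  simp only [mul_zero, sin_zero, arcsin_zero, sin_pi_div_two, mul_one] at hsubst
  rw [arccos_eq_arcsin hx0, ← hsubst, ellE', ellE]
  refine integral_congr_Ioo_of_le pi_div_two_pos.le fun θ hθ => ?_
  exact (cos_sq_div_sqrt_comp_arcsin_mul_deriv hk2 hk0 (hcos θ hθ) (hks θ hθ)).symm

def cosRegion : Set (ℝ × ℝ) := {p | p.2 ∈ Ioo 0 (π / 2) ∧ p.1 ∈ Ioc 0 (cos p.2)}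

theorem mem_cosRegion_iff {x u : ℝ} :
    (x, u) ∈ cosRegion ↔ x ∈ Ioo 0 1 ∧ u ∈ Ioc 0 (arccos x) := by
  constructor
  · rintro ⟨⟨hu0, hu⟩, hx0, hx⟩
    have hcos : cos u < 1 := by
      simpa using cos_lt_cos_of_nonneg_of_le_pi le_rfl (by linarith [pi_pos]) hu0
    refine ⟨⟨hx0, hx.trans_lt hcos⟩, hu0, ?_⟩
    simpa [arccos_cos hu0.le (by linarith [pi_pos])] using arccos_le_arccos hx
  · rintro ⟨⟨hx0, hx1⟩, hu0, hu⟩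
    refine ⟨⟨hu0, hu.trans_lt (arccos_lt_pi_div_two.2 hx0)⟩, hx0, ?_⟩
    simpa [cos_arccos (by linarith) hx1.le] using
      cos_le_cos_of_nonneg_of_le_pi hu0.le (arccos_le_pi x) hu

theorem measurableSet_cosRegion : MeasurableSet cosRegion := by
  unfold cosRegion; measurability

theorem wallisIntegral_mul_wallisIntegral_add_two (n : ℕ) :
    wallisIntegral n * wallisIntegral (n + 2) = (π / (2 * (n + 1))) * Gamma ((n + 3) / 2) ^ 2
      / (Gamma ((n + 2) / 2) * Gamma ((n + 4) / 2)) := by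
  rw [wallisIntegral_eq_Gamma, wallisIntegral_eq_Gamma]
  push_cast
  rw [show ((n : ℝ) + 2 + 1) / 2 = (n + 1) / 2 + 1 by ring,
    show ((n : ℝ) + 3) / 2 = (n + 1) / 2 + 1 by ring,
    show ((n : ℝ) + 2 + 2) / 2 = (n + 4) / 2 by ring, Gamma_add_one (by positivity)]
  have h1 : Gamma ((n + 1) / 2) ≠ 0 := (Gamma_pos_of_pos (by positivity)).ne'
  have h2 : Gamma ((n + 2) / 2) ≠ 0 := (Gamma_pos_of_pos (by positivity)).ne'
  have h4 : Gamma ((n + 4) / 2) ≠ 0 := (Gamma_pos_of_pos (by positivity)).ne'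
  field_simp
  rw [sq_sqrt pi_pos.le]

theorem integral_pow_mul_ellE' (n : ℕ) :
    ∫ x in (0:ℝ)..1, x ^ n * ellE' x = wallisIntegral n * wallisIntegral (n + 2) := by
  set f : ℝ → ℝ → ℝ := fun x u => x ^ n * (cos u ^ 2 / √(cos u ^ 2 - x ^ 2))
  have h_inner_u : ∀ x ∈ Ioo (0:ℝ) 1, ∫ u in Ioc 0 (arccos x), f x u = x ^ n * ellE' x := by
    intro x hx
    rw [← integral_of_le (arccos_nonneg x), intervalIntegral.integral_const_mul,
      ellE'_eq_integral_cos_sq_div_sqrt hx.1.le hx.2]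
  have h_inner_x : ∀ u ∈ Ioo 0 (π / 2),
      ∫ x in Ioc 0 (cos u), f x u = cos u ^ (n + 2) * wallisIntegral n := by
    intro u hu
    have hcos : 0 < cos u := cos_pos_of_mem_Ioo ⟨by linarith [hu.1, pi_pos], hu.2⟩
    simp only [f, mul_div_left_comm _ (cos u ^ 2)]
    rw [MeasureTheory.integral_const_mul, ← integral_of_le hcos.le,
      integral_pow_div_sqrt_sq_sub_sq n hcos]
    ring
  calc ∫ x in (0:ℝ)..1, x ^ n * ellE' x
      = ∫ x in Ioo 0 1, ∫ u in Ioc 0 (arccos x), f x u := by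
        rw [integral_of_le zero_le_one, integral_Ioc_eq_integral_Ioo]
        exact setIntegral_congr_fun measurableSet_Ioo fun x hx => (h_inner_u x hx).symm
    _ = ∫ u in Ioo 0 (π / 2), ∫ x in Ioc 0 (cos u), f x u := by
        refine setIntegral_setIntegral_swap_of_nonneg measurableSet_cosRegion measurableSet_Ioo
          measurableSet_Ioo (fun _ => measurableSet_Ioc) (fun _ => measurableSet_Ioc)
          (fun x u => mem_cosRegion_iff) (fun x u => Iff.rfl) (by fun_prop) ?_ ?_ ?_
        · rintro x u ⟨-, hx, -⟩
          positivity
        · intro u hu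
          have hcos : 0 < cos u := cos_pos_of_mem_Ioo ⟨by linarith [hu.1, pi_pos], hu.2⟩
          simp only [f, mul_div_left_comm _ (cos u ^ 2)]
          exact ((intervalIntegrable_iff_integrableOn_Ioc_of_le hcos.le).1
            (intervalIntegrable_pow_div_sqrt_sq_sub_sq n hcos)).const_mul _
        · refine IntegrableOn.congr_fun ?_ (fun u hu => (h_inner_x u hu).symm) measurableSet_Ioo
          exact (by fun_prop : Continuous fun u => cos u ^ (n + 2) * wallisIntegral n)
            |>.integrableOn_Icc.mono_set Ioo_subset_Icc_self
    _ = ∫ u in Ioo 0 (π / 2), cos u ^ (n + 2) * wallisIntegral n :=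
        setIntegral_congr_fun measurableSet_Ioo h_inner_x
    _ = wallisIntegral n * wallisIntegral (n + 2) := by
        rw [MeasureTheory.integral_mul_const, ← integral_Ioc_eq_integral_Ioo,
          ← integral_of_le pi_div_two_pos.le, integral_cos_pow_eq_wallisIntegral, mul_comm]

theorem stmt_4 : ∀ n : ℕ,
    (∫ x in (0:ℝ)..1, x ^ n * ellE' x)
      = (π / (2 * (n + 1))) * Real.Gamma ((n + 3) / 2) ^ 2
          / (Real.Gamma ((n + 2) / 2) * Real.Gamma ((n + 4) / 2)) := by
  intro n
  rw [integral_pow_mul_ellE', wallisIntegral_mul_wallisIntegral_add_two]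
end

section
/- ∫₀¹ x·K'(x)² dx = (7/4)·ζ(3). -/
open Real intervalIntegral

/-!
Writing `K'(x) = ∫₀^{π/2} dθ / A_θ(x)` with `A_θ(x) = √(1 - (1 - x²) sin² θ)`, the integrand
`x K'(x)²` is a double integral over `(θ, φ)`, and by Tonelli the `x`-integral can be done first:
`log (sin θ · A_φ + sin φ · A_θ) / (sin θ sin φ)` is an antiderivative of `x / (A_θ A_φ)`, so it
equals `log ((sin θ + sin φ) / sin (θ + φ)) / (sin θ sin φ)`, that is
`log ((1 + w) / (1 - w)) / (sin θ sin φ)` with `w = tan (θ/2) tan (φ/2)`. Expanding the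
logarithm separates the variables: `∑ₖ 2/(2k+1) · gₖ(θ) gₖ(φ)` with
`gₖ(θ) = tan (θ/2)^(2k+1) / sin θ`, the derivative of `tan (θ/2)^(2k+1) / (2k+1)`. Hence
`∫₀^{π/2} gₖ = 1/(2k+1)`, and the integral is `∑ₖ 2/(2k+1)³ = 2 · (1 - 1/8) ζ(3)`.
All sums and integrals are exchanged in `ℝ≥0∞`.
-/

open MeasureTheory Set

theorem ofReal_mul_integral_sq {α : Type*} [MeasurableSpace α] {μ : Measure α} {f : α → ℝ}
    (hf : Integrable f μ) (hf₀ : 0 ≤ f) {c : ℝ} (hc : 0 ≤ c) :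
    ENNReal.ofReal (c * (∫ a, f a ∂μ) ^ 2) =
      ∫⁻ a, ∫⁻ b, ENNReal.ofReal (c * f a * f b) ∂μ ∂μ := by
  have hI : ENNReal.ofReal (∫ a, f a ∂μ) = ∫⁻ a, ENNReal.ofReal (f a) ∂μ :=
    ofReal_integral_eq_lintegral_ofReal hf (.of_forall hf₀)
  calc ENNReal.ofReal (c * (∫ a, f a ∂μ) ^ 2)
      = ENNReal.ofReal c * (∫⁻ a, ENNReal.ofReal (f a) ∂μ) * ∫⁻ b, ENNReal.ofReal (f b) ∂μ := by
        rw [← hI, ← ENNReal.ofReal_mul hc,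
          ← ENNReal.ofReal_mul (mul_nonneg hc (integral_nonneg hf₀))]
        ring_nf
    _ = ∫⁻ a, ∫⁻ b, ENNReal.ofReal (c * f a * f b) ∂μ ∂μ := by
        rw [← lintegral_const_mul' _ _ ENNReal.ofReal_ne_top, ← lintegral_mul_const' _ _ (by
          rw [← hI]; exact ENNReal.ofReal_ne_top)]
        refine lintegral_congr fun a => ?_
        rw [← lintegral_const_mul' _ _ (by finiteness)]
        refine lintegral_congr fun b => ?_
        rw [ENNReal.ofReal_mul (mul_nonneg hc (hf₀ a)), ENNReal.ofReal_mul hc]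

theorem lintegral_lintegral_tsum_mul {α β : Type*} [MeasurableSpace α] [MeasurableSpace β]
    {μ : Measure α} {ν : Measure β} (c : ℕ → ENNReal) {f : ℕ → α → ENNReal} {g : ℕ → β → ENNReal}
    (hf : ∀ k, Measurable (f k)) (hg : ∀ k, Measurable (g k)) :
    ∫⁻ a, ∫⁻ b, ∑' k, c k * f k a * g k b ∂ν ∂μ =
      ∑' k, c k * (∫⁻ a, f k a ∂μ) * ∫⁻ b, g k b ∂ν := by
  simp_rw [lintegral_tsum fun k => ((hg k).const_mul _).aemeasurable, lintegral_const_mul _ (hg _)]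
  rw [lintegral_tsum fun k => (((hf k).const_mul _).mul_const _).aemeasurable]
  simp_rw [lintegral_mul_const _ ((hf _).const_mul _), lintegral_const_mul _ (hf _)]

theorem lintegral_lintegral_lintegral_rotate {α β γ : Type*} [MeasurableSpace α]
    [MeasurableSpace β] [MeasurableSpace γ] {μ : Measure α} {ν : Measure β} {ρ : Measure γ}
    [SFinite μ] [SFinite ν] [SFinite ρ] {f : α → β → γ → ENNReal}
    (hf : Measurable fun p : α × β × γ => f p.1 p.2.1 p.2.2) :
    ∫⁻ a, ∫⁻ b, ∫⁻ c, f a b c ∂ρ ∂ν ∂μ = ∫⁻ b, ∫⁻ c, ∫⁻ a, f a b c ∂μ ∂ρ ∂ν := by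
  rw [lintegral_lintegral_swap]
  · refine lintegral_congr fun b => lintegral_lintegral_swap ?_
    exact (hf.comp (measurable_fst.prodMk (measurable_const.prodMk measurable_snd))).aemeasurable
  · refine (Measurable.lintegral_prod_right
      (f := fun q : α × β => fun c => f q.1 q.2 c) ?_).aemeasurable
    exact hf.comp (measurable_fst.fst.prodMk (measurable_fst.snd.prodMk measurable_snd))

theorem hasSum_one_div_two_mul_add_one_pow {p : ℕ} (hp : 1 < p) :
    HasSum (fun k : ℕ => 1 / (2 * (k : ℝ) + 1) ^ p)
      ((1 - 1 / 2 ^ p) * ∑' n : ℕ, 1 / ((n : ℝ) + 1) ^ p) := by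
  set f : ℕ → ℝ := fun n => 1 / ((n : ℝ) + 1) ^ p
  have hf : Summable f := by
    simpa [f] using (summable_nat_add_iff 1).2 (summable_one_div_nat_pow.2 hp)
  have h_even : Summable fun k => f (2 * k) :=
    hf.comp_injective (mul_right_injective₀ two_ne_zero)
  have h_odd : HasSum (fun k => f (2 * k + 1)) (1 / 2 ^ p * ∑' n, f n) := by
    refine hf.hasSum.mul_left (1 / 2 ^ p) |>.congr_fun fun k => ?_
    simp only [f]
    push_cast
    rw [show 2 * (k : ℝ) + 1 + 1 = 2 * ((k : ℝ) + 1) by ring, mul_pow]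
    field_simp
  have h_split := (h_even.hasSum.even_add_odd h_odd).unique hf.hasSum
  convert h_even.hasSum using 1
  · simp [f]
  · linarith

@[fun_prop]
theorem Real.measurable_tan : Measurable tan := by
  rw [show tan = fun x => sin x / cos x from funext tan_eq_sin_div_cos]
  fun_prop

theorem sin_two_mul_add_sin_two_mul_mul_one_sub_tan_mul_tan {a b : ℝ} (ha : cos a ≠ 0)
    (hb : cos b ≠ 0) :
    (sin (2 * a) + sin (2 * b)) * (1 - tan a * tan b) =
      sin (2 * a + 2 * b) * (1 + tan a * tan b) := by
  rw [tan_eq_sin_div_cos, tan_eq_sin_div_cos, sin_add, sin_two_mul, sin_two_mul, cos_two_mul,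
    cos_two_mul]
  field_simp
  linear_combination (-2 * sin a * cos a ^ 2 * cos b) * sin_sq_add_cos_sq b
    + (-2 * cos a * sin b * cos b ^ 2) * sin_sq_add_cos_sq a

theorem tan_half_pos_lt_one {θ : ℝ} (hθ : θ ∈ Ioo 0 (π / 2)) :
    0 < tan (θ / 2) ∧ tan (θ / 2) < 1 := by
  refine ⟨tan_pos_of_pos_of_lt_pi_div_two (by linarith [hθ.1]) (by linarith [hθ.2, pi_pos]), ?_⟩
  simpa only [tan_pi_div_four] using tan_lt_tan_of_nonneg_of_lt_pi_div_two
    (by linarith [hθ.1]) (by linarith [pi_pos]) (by linarith [hθ.2] : θ / 2 < π / 4)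

theorem lintegral_tan_half_pow_succ_div_sin (n : ℕ) :
    ∫⁻ θ in Ioo 0 (π / 2), ENNReal.ofReal (tan (θ / 2) ^ (n + 1) / sin θ) =
      ENNReal.ofReal (1 / (n + 1)) := by
  -- the integrand is `0 / 0` at `θ = 0`; `f'` is its continuous extension to `[0, π / 2]`
  set f' : ℝ → ℝ := fun θ => tan (θ / 2) ^ n / (2 * cos (θ / 2) ^ 2)
  have hcos : ∀ θ ∈ Icc 0 (π / 2), 0 < cos (θ / 2) := fun θ hθ =>
    cos_pos_of_mem_Ioo ⟨by linarith [hθ.1, pi_pos], by linarith [hθ.2, pi_pos]⟩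
  have h_eq : ∀ θ ∈ Ioo 0 (π / 2), tan (θ / 2) ^ (n + 1) / sin θ = f' θ := by
    intro θ hθ
    have hc := hcos θ (Ioo_subset_Icc_self hθ)
    rw [show sin θ = 2 * sin (θ / 2) * cos (θ / 2) by rw [← sin_two_mul]; ring_nf]
    simp only [f', tan_eq_sin_div_cos, pow_succ]
    have hs : sin (θ / 2) ≠ 0 := (sin_pos_of_pos_of_lt_pi (by linarith [hθ.1])
      (by linarith [hθ.2, pi_pos])).ne'
    field_simp
  have h_cont : ContinuousOn f' (Icc 0 (π / 2)) := by
    refine ContinuousOn.div (ContinuousOn.pow ?_ n) (by fun_prop)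
      fun θ hθ => by have := hcos θ hθ; positivity
    simp only [tan_eq_sin_div_cos]
    exact ContinuousOn.div (by fun_prop) (by fun_prop) fun θ hθ => (hcos θ hθ).ne'
  have h_deriv : ∀ θ ∈ uIcc 0 (π / 2),
      HasDerivAt (fun θ => tan (θ / 2) ^ (n + 1) / (n + 1)) (f' θ) θ := by
    intro θ hθ
    rw [uIcc_of_le (by positivity)] at hθ
    have hc := (hcos θ hθ).ne'
    have := (((hasDerivAt_tan hc).comp θ ((hasDerivAt_id θ).div_const 2)).pow (n + 1)).div_const
      ((n : ℝ) + 1)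
    refine this.congr_deriv ?_
    simp only [f', Function.comp_apply, id, Nat.cast_add, Nat.cast_one, add_tsub_cancel_right]
    field_simp
  have h_int : ∫ θ in Ioo 0 (π / 2), f' θ = 1 / (n + 1) := by
    rw [← integral_Ioc_eq_integral_Ioo, ← intervalIntegral.integral_of_le (by positivity),
      intervalIntegral.integral_eq_sub_of_hasDerivAt h_deriv
        (h_cont.intervalIntegrable_of_Icc (by positivity))]
    simp [show π / 2 / 2 = π / 4 by ring]
  have h_nonneg : ∀ θ ∈ Ioo 0 (π / 2), 0 ≤ f' θ := fun θ hθ => by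
    have := hcos θ (Ioo_subset_Icc_self hθ)
    have : 0 ≤ tan (θ / 2) := tan_nonneg_of_nonneg_of_le_pi_div_two (by linarith [hθ.1])
      (by linarith [hθ.2, pi_pos])
    positivity
  rw [setLIntegral_congr_fun measurableSet_Ioo fun θ hθ => by rw [h_eq θ hθ], ← h_int,
    ofReal_integral_eq_lintegral_ofReal ((h_cont.integrableOn_Icc).mono_set Ioo_subset_Icc_self)
      ((ae_restrict_iff' measurableSet_Ioo).2 (.of_forall h_nonneg))]

theorem measurable_ellK : Measurable ellK := by
  have h : ellK = fun k => ∫ θ in Ioc 0 (π / 2), 1 / √(1 - k ^ 2 * sin θ ^ 2) := by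
    ext k
    rw [ellK, intervalIntegral.integral_of_le (by positivity)]
  rw [h]
  refine (StronglyMeasurable.integral_prod_right'
    (f := fun p : ℝ × ℝ => 1 / √(1 - p.1 ^ 2 * sin p.2 ^ 2)) ?_).measurable
  exact Measurable.stronglyMeasurable (by fun_prop)

theorem measurable_ellK' : Measurable ellK' :=
  measurable_ellK.comp (by fun_prop : Measurable fun x : ℝ => √(1 - x ^ 2))

noncomputable def ellK'Integrand (x θ : ℝ) : ℝ := 1 / √(1 - (1 - x ^ 2) * sin θ ^ 2)

theorem one_sub_one_sub_sq_mul_sin_sq (x θ : ℝ) :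
    1 - (1 - x ^ 2) * sin θ ^ 2 = cos θ ^ 2 + x ^ 2 * sin θ ^ 2 := by
  linear_combination -sin_sq_add_cos_sq θ

theorem one_sub_one_sub_sq_mul_sin_sq_pos_of_ne_zero {x : ℝ} (hx : x ≠ 0) (θ : ℝ) :
    0 < 1 - (1 - x ^ 2) * sin θ ^ 2 := by
  rw [one_sub_one_sub_sq_mul_sin_sq]
  rcases eq_or_ne (sin θ) 0 with h | h
  · nlinarith [sin_sq_add_cos_sq θ]
  · positivity

theorem one_sub_one_sub_sq_mul_sin_sq_pos_of_cos_ne_zero (x : ℝ) {θ : ℝ} (hθ : cos θ ≠ 0) :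
    0 < 1 - (1 - x ^ 2) * sin θ ^ 2 := by
  rw [one_sub_one_sub_sq_mul_sin_sq]
  positivity

theorem ellK'Integrand_nonneg (x θ : ℝ) : 0 ≤ ellK'Integrand x θ := by
  unfold ellK'Integrand; positivity

theorem continuous_ellK'Integrand {x : ℝ} (hx : x ≠ 0) : Continuous (ellK'Integrand x) :=
  continuous_const.div (by fun_prop) fun θ =>
    (sqrt_pos.2 (one_sub_one_sub_sq_mul_sin_sq_pos_of_ne_zero hx θ)).ne'

theorem continuous_ellK'Integrand_left {θ : ℝ} (hθ : cos θ ≠ 0) :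
    Continuous fun x => ellK'Integrand x θ :=
  continuous_const.div (by fun_prop) fun x =>
    (sqrt_pos.2 (one_sub_one_sub_sq_mul_sin_sq_pos_of_cos_ne_zero x hθ)).ne'

theorem ellK'_eq_setIntegral {x : ℝ} (hx : x ^ 2 ≤ 1) :
    ellK' x = ∫ θ in Ioo 0 (π / 2), ellK'Integrand x θ := by
  rw [ellK', ellK, intervalIntegral.integral_of_le (by positivity), integral_Ioc_eq_integral_Ioo,
    sq_sqrt (by linarith)]
  rfl

theorem hasDerivAt_sqrt_one_sub_one_sub_sq_mul {x c : ℝ} (h : 0 < 1 - (1 - x ^ 2) * c) :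
    HasDerivAt (fun x => √(1 - (1 - x ^ 2) * c)) (x * c / √(1 - (1 - x ^ 2) * c)) x := by
  have := (((hasDerivAt_pow 2 x).const_sub 1).mul_const c).const_sub 1 |>.sqrt h.ne'
  refine this.congr_deriv ?_
  field_simp
  ring

theorem integral_mul_ellK'Integrand_mul_ellK'Integrand {θ φ : ℝ} (hθ : θ ∈ Ioo 0 (π / 2))
    (hφ : φ ∈ Ioo 0 (π / 2)) :
    ∫ x in 0..1, x * ellK'Integrand x θ * ellK'Integrand x φ =
      (log (sin θ + sin φ) - log (sin (θ + φ))) / (sin θ * sin φ) := by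
  have hcθ := cos_pos_of_mem_Ioo ⟨by linarith [hθ.1, pi_pos], hθ.2⟩
  have hcφ := cos_pos_of_mem_Ioo ⟨by linarith [hφ.1, pi_pos], hφ.2⟩
  have hsθ := sin_pos_of_pos_of_lt_pi hθ.1 (by linarith [hθ.2, pi_pos])
  have hsφ := sin_pos_of_pos_of_lt_pi hφ.1 (by linarith [hφ.2, pi_pos])
  set A : ℝ → ℝ := fun x => √(1 - (1 - x ^ 2) * sin θ ^ 2)
  set B : ℝ → ℝ := fun x => √(1 - (1 - x ^ 2) * sin φ ^ 2)
  have hA : ∀ x, 0 < 1 - (1 - x ^ 2) * sin θ ^ 2 := fun x =>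
    one_sub_one_sub_sq_mul_sin_sq_pos_of_cos_ne_zero x hcθ.ne'
  have hB : ∀ x, 0 < 1 - (1 - x ^ 2) * sin φ ^ 2 := fun x =>
    one_sub_one_sub_sq_mul_sin_sq_pos_of_cos_ne_zero x hcφ.ne'
  have h_deriv : ∀ x ∈ uIcc (0 : ℝ) 1, HasDerivAt
      (fun x => log (sin θ * B x + sin φ * A x) / (sin θ * sin φ))
      (x * ellK'Integrand x θ * ellK'Integrand x φ) x := by
    intro x _
    have hAx := sqrt_pos.2 (hA x)
    have hBx := sqrt_pos.2 (hB x)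
    have hG := add_pos (mul_pos hsθ hBx) (mul_pos hsφ hAx)
    have := ((((hasDerivAt_sqrt_one_sub_one_sub_sq_mul (hB x)).const_mul (sin θ)).add
      ((hasDerivAt_sqrt_one_sub_one_sub_sq_mul (hA x)).const_mul (sin φ))).log
      hG.ne').div_const (sin θ * sin φ)
    refine this.congr_deriv ?_
    simp only [Pi.add_apply, ellK'Integrand]
    generalize √(1 - (1 - x ^ 2) * sin θ ^ 2) = a at *
    generalize √(1 - (1 - x ^ 2) * sin φ ^ 2) = b at *
    field_simp
    ring
  have h_cos_eq : ∀ α, 0 < cos α → √(1 - (1 - 0 ^ 2) * sin α ^ 2) = cos α := fun α hα => by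
    rw [one_sub_one_sub_sq_mul_sin_sq, zero_pow two_ne_zero, zero_mul, add_zero, sqrt_sq hα.le]
  have h_cont : Continuous fun x => x * ellK'Integrand x θ * ellK'Integrand x φ :=
    (continuous_id.mul (continuous_ellK'Integrand_left hcθ.ne')).mul
      (continuous_ellK'Integrand_left hcφ.ne')
  rw [intervalIntegral.integral_eq_sub_of_hasDerivAt h_deriv (h_cont.intervalIntegrable 0 1)]
  simp only [A, B, h_cos_eq θ hcθ, h_cos_eq φ hcφ, sin_add]
  norm_num
  ring_nf

theorem hasSum_tan_half_pow_div_sin_mul {θ φ : ℝ} (hθ : θ ∈ Ioo 0 (π / 2))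
    (hφ : φ ∈ Ioo 0 (π / 2)) :
    HasSum (fun k : ℕ => 2 / (2 * k + 1) * (tan (θ / 2) ^ (2 * k + 1) / sin θ) *
        (tan (φ / 2) ^ (2 * k + 1) / sin φ))
      ((log (sin θ + sin φ) - log (sin (θ + φ))) / (sin θ * sin φ)) := by
  obtain ⟨hθ₀, hθ₁⟩ := tan_half_pos_lt_one hθ
  obtain ⟨hφ₀, hφ₁⟩ := tan_half_pos_lt_one hφ
  set w := tan (θ / 2) * tan (φ / 2)
  have hw₀ : 0 < w := mul_pos hθ₀ hφ₀
  have hw₁ : w < 1 := by nlinarith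
  have hsθ := sin_pos_of_pos_of_lt_pi hθ.1 (by linarith [hθ.2, pi_pos])
  have hsφ := sin_pos_of_pos_of_lt_pi hφ.1 (by linarith [hφ.2, pi_pos])
  have hsθφ := sin_pos_of_pos_of_lt_pi (add_pos hθ.1 hφ.1) (by linarith [hθ.2, hφ.2])
  have h_log : log (sin θ + sin φ) - log (sin (θ + φ)) = log (1 + w) - log (1 - w) := by
    have hcθ : 0 < cos (θ / 2) :=
      cos_pos_of_mem_Ioo ⟨by linarith [hθ.1, pi_pos], by linarith [hθ.2, pi_pos]⟩
    have hcφ : 0 < cos (φ / 2) :=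
      cos_pos_of_mem_Ioo ⟨by linarith [hφ.1, pi_pos], by linarith [hφ.2, pi_pos]⟩
    have h := sin_two_mul_add_sin_two_mul_mul_one_sub_tan_mul_tan hcθ.ne' hcφ.ne'
    rw [mul_div_cancel₀ θ two_ne_zero, mul_div_cancel₀ φ two_ne_zero] at h
    have := congrArg log h
    rw [log_mul (by positivity) (by linarith), log_mul hsθφ.ne' (by linarith)] at this
    linarith
  have := (hasSum_log_sub_log_of_abs_lt_one (abs_lt.2 ⟨by linarith, hw₁⟩)).div_const
    (sin θ * sin φ)
  rw [← h_log] at this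
  refine this.congr_fun fun k => ?_
  rw [mul_pow]
  field_simp

theorem lintegral_mul_ellK'Integrand_mul_ellK'Integrand {θ φ : ℝ} (hθ : θ ∈ Ioo 0 (π / 2))
    (hφ : φ ∈ Ioo 0 (π / 2)) :
    ∫⁻ x in Ioo 0 1, ENNReal.ofReal (x * ellK'Integrand x θ * ellK'Integrand x φ) =
      ∑' k : ℕ, ENNReal.ofReal (2 / (2 * k + 1)) *
        ENNReal.ofReal (tan (θ / 2) ^ (2 * k + 1) / sin θ) *
        ENNReal.ofReal (tan (φ / 2) ^ (2 * k + 1) / sin φ) := by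
  have hcθ := cos_pos_of_mem_Ioo ⟨by linarith [hθ.1, pi_pos], hθ.2⟩
  have hcφ := cos_pos_of_mem_Ioo ⟨by linarith [hφ.1, pi_pos], hφ.2⟩
  have h_cont : Continuous fun x => x * ellK'Integrand x θ * ellK'Integrand x φ :=
    (continuous_id.mul (continuous_ellK'Integrand_left hcθ.ne')).mul
      (continuous_ellK'Integrand_left hcφ.ne')
  have h_nonneg : ∀ x ∈ Ioo (0 : ℝ) 1, 0 ≤ x * ellK'Integrand x θ * ellK'Integrand x φ :=
    fun x hx => mul_nonneg (mul_nonneg hx.1.le (ellK'Integrand_nonneg x θ))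
      (ellK'Integrand_nonneg x φ)
  have h_term : ∀ {α : ℝ}, α ∈ Ioo 0 (π / 2) → ∀ k : ℕ, 0 ≤ tan (α / 2) ^ (2 * k + 1) / sin α :=
    fun hα k => div_nonneg (pow_nonneg (tan_half_pos_lt_one hα).1.le _)
      (sin_pos_of_pos_of_lt_pi hα.1 (by linarith [hα.2, pi_pos])).le
  have h_sum := hasSum_tan_half_pow_div_sin_mul hθ hφ
  rw [← ofReal_integral_eq_lintegral_ofReal (h_cont.integrableOn_Icc.mono_set Ioo_subset_Icc_self)
      ((ae_restrict_iff' measurableSet_Ioo).2 (.of_forall h_nonneg)),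
    ← integral_Ioc_eq_integral_Ioo, ← intervalIntegral.integral_of_le zero_le_one,
    integral_mul_ellK'Integrand_mul_ellK'Integrand hθ hφ, ← h_sum.tsum_eq,
    ENNReal.ofReal_tsum_of_nonneg (fun k => by have := h_term hθ k; have := h_term hφ k; positivity)
      h_sum.summable]
  refine tsum_congr fun k => ?_
  rw [ENNReal.ofReal_mul (by have := h_term hθ k; positivity), ENNReal.ofReal_mul (by positivity)]

theorem ofReal_mul_ellK'_sq {x : ℝ} (hx : x ∈ Ioo 0 1) :
    ENNReal.ofReal (x * ellK' x ^ 2) =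
      ∫⁻ θ in Ioo 0 (π / 2), ∫⁻ φ in Ioo 0 (π / 2),
        ENNReal.ofReal (x * ellK'Integrand x θ * ellK'Integrand x φ) := by
  rw [ellK'_eq_setIntegral (by nlinarith [hx.1, hx.2])]
  exact ofReal_mul_integral_sq
    ((continuous_ellK'Integrand hx.1.ne').integrableOn_Icc.mono_set Ioo_subset_Icc_self)
    (ellK'Integrand_nonneg x) hx.1.le

theorem stmt_12 :
    (∫ x in (0:ℝ)..1, x * ellK' x ^ 2) = (7 / 4) * ∑' n : ℕ, 1 / ((n : ℝ) + 1) ^ 3 := by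
  have h_meas : Measurable fun p : ℝ × ℝ × ℝ =>
      ENNReal.ofReal (p.1 * ellK'Integrand p.1 p.2.1 * ellK'Integrand p.1 p.2.2) := by
    unfold ellK'Integrand; fun_prop
  have h_sum := (hasSum_one_div_two_mul_add_one_pow (p := 3) (by norm_num)).mul_left 2
  calc ∫ x in (0:ℝ)..1, x * ellK' x ^ 2
      = (∫⁻ x in Ioo 0 1, ENNReal.ofReal (x * ellK' x ^ 2)).toReal := by
        rw [intervalIntegral.integral_of_le zero_le_one, integral_Ioc_eq_integral_Ioo]
        refine integral_eq_lintegral_of_nonneg_ae ((ae_restrict_iff' measurableSet_Ioo).2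
          (.of_forall fun x hx => by have := hx.1.le; positivity)) ?_
        exact (measurable_id.mul (measurable_ellK'.pow_const 2)).aestronglyMeasurable
    _ = (∫⁻ θ in Ioo 0 (π / 2), ∫⁻ φ in Ioo 0 (π / 2), ∫⁻ x in Ioo 0 1,
          ENNReal.ofReal (x * ellK'Integrand x θ * ellK'Integrand x φ)).toReal := by
        rw [setLIntegral_congr_fun measurableSet_Ioo fun x hx => ofReal_mul_ellK'_sq hx,
          lintegral_lintegral_lintegral_rotate h_meas]
    _ = (∑' k : ℕ, ENNReal.ofReal (2 * (1 / (2 * (k : ℝ) + 1) ^ 3))).toReal := by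
        rw [setLIntegral_congr_fun measurableSet_Ioo fun θ hθ =>
            setLIntegral_congr_fun measurableSet_Ioo fun φ hφ =>
              lintegral_mul_ellK'Integrand_mul_ellK'Integrand hθ hφ,
          lintegral_lintegral_tsum_mul _ (fun k => by fun_prop) (fun k => by fun_prop)]
        simp_rw [lintegral_tan_half_pow_succ_div_sin]
        congr 2 with k
        rw [← ENNReal.ofReal_mul (by positivity), ← ENNReal.ofReal_mul (by positivity)]
        congr 1
        push_cast
        field_simp
    _ = 7 / 4 * ∑' n : ℕ, 1 / ((n : ℝ) + 1) ^ 3 := by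
        rw [← ENNReal.ofReal_tsum_of_nonneg (fun k => by positivity) h_sum.summable,
          h_sum.tsum_eq, ENNReal.toReal_ofReal (by positivity)]
        norm_num
        ring
end

section
/- ∫₀¹ (x·K(x)² − 2x·E(x)·K(x)) dx = −1/2. -/
/-!
Legendre's formulas `E' = (E - K) / x` and `K' = (E - (1 - x²) K) / (x (1 - x²))`, obtained by
differentiating under the integral sign (for `K` after an integration by parts in `θ`), show that
`F = -((1 - x²) K (K - 2 E) + E²) / 2` is a primitive of `x K² - 2 x E K` on `(0, 1)`.
At `0`, `K = E = π / 2` gives `F 0 = 0`. Near `1`, `E → 1` while `K² √(1 - x²) ≤ π²`, so `F → -1/2`;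
the same bound makes the integrand `O((1 - x²)^(-1/2))`, hence integrable, and the improper
fundamental theorem of calculus gives the value `-1/2`.
-/

open Real intervalIntegral

open Set Filter Topology
open MeasureTheory (volume)

theorem hasDerivAt_intervalIntegral_of_continuousOn {F F' : ℝ → ℝ → ℝ} {U : Set ℝ}
    {a b x₀ : ℝ} (hU : IsOpen U) (hx₀ : x₀ ∈ U) (hF : ∀ x ∈ U, Continuous (F x))
    (hF' : ContinuousOn (Function.uncurry F') (U ×ˢ univ))
    (hderiv : ∀ x ∈ U, ∀ t, HasDerivAt (F · t) (F' x t) x) :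
    HasDerivAt (fun x => ∫ t in a..b, F x t) (∫ t in a..b, F' x₀ t) x₀ := by
  obtain ⟨r, hr, hrU⟩ := Metric.nhds_basis_closedBall.mem_iff.1 (hU.mem_nhds hx₀)
  obtain ⟨C, hC⟩ := ((isCompact_closedBall x₀ r).prod isCompact_uIcc).exists_bound_of_continuousOn
    (hF'.mono (prod_mono hrU (subset_univ (uIcc a b))))
  have hF'x₀ : Continuous (F' x₀) := by
    rw [← continuousOn_univ]
    exact hF'.comp (continuous_const.prodMk continuous_id).continuousOn
      fun t _ => ⟨hx₀, mem_univ t⟩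
  refine (intervalIntegral.hasDerivAt_integral_of_dominated_loc_of_deriv_le
    (bound := fun _ => C) (Metric.closedBall_mem_nhds x₀ hr) ?_
    ((hF x₀ hx₀).intervalIntegrable a b) hF'x₀.aestronglyMeasurable ?_
    intervalIntegrable_const ?_).2
  · filter_upwards [hU.mem_nhds hx₀] with x hx
    exact (hF x hx).aestronglyMeasurable
  · exact MeasureTheory.ae_of_all _ fun t ht x hx => hC (x, t) ⟨hx, uIoc_subset_uIcc ht⟩
  · exact MeasureTheory.ae_of_all _ fun t _ x hx => hderiv x (hrU hx) t

lemma one_sub_sq_mul_sin_sq_pos {x : ℝ} (hx : x ^ 2 < 1) (θ : ℝ) :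
    0 < 1 - x ^ 2 * sin θ ^ 2 := by
  nlinarith [sin_sq_le_one θ, sq_nonneg (x * sin θ)]

lemma one_sub_sq_le_one_sub_sq_mul_sin_sq (x θ : ℝ) : 1 - x ^ 2 ≤ 1 - x ^ 2 * sin θ ^ 2 := by
  nlinarith [sin_sq_le_one θ, sq_nonneg x]

lemma cos_sq_le_one_sub_sq_mul_sin_sq {x : ℝ} (hx : x ^ 2 ≤ 1) (θ : ℝ) :
    cos θ ^ 2 ≤ 1 - x ^ 2 * sin θ ^ 2 := by
  nlinarith [sin_sq_add_cos_sq θ, sq_nonneg (sin θ)]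

lemma one_sub_sq_mul_sin_sq_le_one (x θ : ℝ) : 1 - x ^ 2 * sin θ ^ 2 ≤ 1 := by
  nlinarith [sq_nonneg (x * sin θ)]

lemma isOpen_sq_lt_one : IsOpen {x : ℝ | x ^ 2 < 1} :=
  isOpen_lt (continuous_pow 2) continuous_const

lemma hasDerivAt_sqrt_one_sub_sq_mul {x s : ℝ} (h : 0 < 1 - x ^ 2 * s) :
    HasDerivAt (fun y => √(1 - y ^ 2 * s)) (-(x * s) / √(1 - x ^ 2 * s)) x := by
  have hu : HasDerivAt (fun y => 1 - y ^ 2 * s) (-(2 * x * s)) x := by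
    simpa using ((hasDerivAt_pow 2 x).mul_const s).const_sub 1
  convert hu.sqrt h.ne' using 1
  field_simp

lemma hasDerivAt_one_div_sqrt_one_sub_sq_mul {x s : ℝ} (h : 0 < 1 - x ^ 2 * s) :
    HasDerivAt (fun y => 1 / √(1 - y ^ 2 * s))
      (x * s / ((1 - x ^ 2 * s) * √(1 - x ^ 2 * s))) x := by
  simp only [one_div]
  refine ((hasDerivAt_sqrt_one_sub_sq_mul h).inv (sqrt_pos.2 h).ne').congr_deriv ?_
  rw [sq_sqrt h.le]
  field_simp

lemma continuous_one_div_sqrt_one_sub_sq_mul_sin_sq {x : ℝ} (hx : x ^ 2 < 1) :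
    Continuous fun θ => 1 / √(1 - x ^ 2 * sin θ ^ 2) :=
  continuous_const.div (by fun_prop) fun θ => (sqrt_pos.2 (one_sub_sq_mul_sin_sq_pos hx θ)).ne'

lemma continuous_ellE : Continuous ellE :=
  intervalIntegral.continuous_parametric_intervalIntegral_of_continuous' (by fun_prop) _ _

lemma hasDerivAt_ellE_integral {x : ℝ} (hx : x ^ 2 < 1) :
    HasDerivAt ellE (∫ θ in (0:ℝ)..(π/2), -(x * sin θ ^ 2) / √(1 - x ^ 2 * sin θ ^ 2)) x := by
  refine hasDerivAt_intervalIntegral_of_continuousOn isOpen_sq_lt_one hx (fun _ _ => by fun_prop)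
    ?_ fun y hy θ => hasDerivAt_sqrt_one_sub_sq_mul (one_sub_sq_mul_sin_sq_pos hy θ)
  exact ContinuousOn.div (by fun_prop) (by fun_prop)
    fun p hp => (sqrt_pos.2 (one_sub_sq_mul_sin_sq_pos hp.1 _)).ne'

lemma hasDerivAt_ellK_integral {x : ℝ} (hx : x ^ 2 < 1) :
    HasDerivAt ellK (∫ θ in (0:ℝ)..(π/2),
      x * sin θ ^ 2 / ((1 - x ^ 2 * sin θ ^ 2) * √(1 - x ^ 2 * sin θ ^ 2))) x := by
  refine hasDerivAt_intervalIntegral_of_continuousOn isOpen_sq_lt_one hx ?_ ?_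
    fun y hy θ => hasDerivAt_one_div_sqrt_one_sub_sq_mul (one_sub_sq_mul_sin_sq_pos hy θ)
  · exact fun y hy => continuous_one_div_sqrt_one_sub_sq_mul_sin_sq hy
  · refine ContinuousOn.div (by fun_prop) (by fun_prop) fun p hp => ?_
    have := one_sub_sq_mul_sin_sq_pos hp.1 p.2
    positivity

lemma continuousAt_ellK {x : ℝ} (hx : x ^ 2 < 1) : ContinuousAt ellK x :=
  (hasDerivAt_ellK_integral hx).continuousAt

lemma hasDerivAt_ellE {x : ℝ} (hx₀ : x ≠ 0) (hx : x ^ 2 < 1) :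
    HasDerivAt ellE ((ellE x - ellK x) / x) x := by
  refine (hasDerivAt_ellE_integral hx).congr_deriv ?_
  rw [ellE, ellK, ← integral_sub (Continuous.intervalIntegrable (by fun_prop) _ _)
    ((continuous_one_div_sqrt_one_sub_sq_mul_sin_sq hx).intervalIntegrable _ _),
    ← integral_div]
  refine integral_congr fun θ _ => ?_
  have h := one_sub_sq_mul_sin_sq_pos hx θ
  field_simp
  rw [sq_sqrt h.le]
  ring

lemma hasDerivAt_sin_mul_cos_div_sqrt {x : ℝ} (hx : x ^ 2 < 1) (θ : ℝ) :
    HasDerivAt (fun θ => sin θ * cos θ / √(1 - x ^ 2 * sin θ ^ 2))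
      ((1 - 2 * sin θ ^ 2 + x ^ 2 * sin θ ^ 4) /
        ((1 - x ^ 2 * sin θ ^ 2) * √(1 - x ^ 2 * sin θ ^ 2))) θ := by
  have h := one_sub_sq_mul_sin_sq_pos hx θ
  have hu : HasDerivAt (fun θ => 1 - x ^ 2 * sin θ ^ 2) (-(x ^ 2 * (2 * sin θ * cos θ))) θ := by
    simpa using (((hasDerivAt_sin θ).pow 2).const_mul (x ^ 2)).const_sub 1
  refine (((hasDerivAt_sin θ).mul (hasDerivAt_cos θ)).div (hu.sqrt h.ne')
    (sqrt_pos.2 h).ne').congr_deriv ?_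
  have hcos : cos θ ^ 2 = 1 - sin θ ^ 2 := by rw [← sin_sq_add_cos_sq θ]; ring
  simp only [Pi.mul_apply]
  have hr := sq_sqrt h.le
  set u := 1 - x ^ 2 * sin θ ^ 2 with hu_def
  set r := √u
  have hr0 : 0 < r := sqrt_pos.2 h
  field_simp
  rw [hr, hcos, hu_def]
  ring

/- With `u = 1 - x² sin² θ`, the integrand equals
`((√u - (1 - x²) / √u) - x² ∂θ (sin θ cos θ / √u)) / (x (1 - x²))`, and the exact derivative
integrates to zero because `sin θ cos θ` vanishes at `0` and `π / 2`. -/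
lemma integral_deriv_ellK_integrand {x : ℝ} (hx₀ : x ≠ 0) (hx : x ^ 2 < 1) :
    ∫ θ in (0:ℝ)..(π/2),
      x * sin θ ^ 2 / ((1 - x ^ 2 * sin θ ^ 2) * √(1 - x ^ 2 * sin θ ^ 2))
      = (ellE x - (1 - x ^ 2) * ellK x) / (x * (1 - x ^ 2)) := by
  set g' : ℝ → ℝ := fun θ => (1 - 2 * sin θ ^ 2 + x ^ 2 * sin θ ^ 4) /
    ((1 - x ^ 2 * sin θ ^ 2) * √(1 - x ^ 2 * sin θ ^ 2))
  have hG : IntervalIntegrable g' volume 0 (π/2) := by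
    refine (Continuous.div (by fun_prop) (by fun_prop) fun θ => ?_).intervalIntegrable _ _
    have := one_sub_sq_mul_sin_sq_pos hx θ
    positivity
  have hg' : ∫ θ in (0:ℝ)..(π/2), g' θ = 0 := by
    rw [integral_eq_sub_of_hasDerivAt (fun θ _ => hasDerivAt_sin_mul_cos_div_sqrt hx θ) hG]
    simp
  have hE : IntervalIntegrable (fun θ => √(1 - x ^ 2 * sin θ ^ 2)) volume 0 (π/2) :=
    Continuous.intervalIntegrable (by fun_prop) _ _
  have hK :=
    (continuous_one_div_sqrt_one_sub_sq_mul_sin_sq hx).intervalIntegrable (μ := volume) 0 (π/2)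
  have hxx : 0 < 1 - x ^ 2 := by linarith
  calc _ = ∫ θ in (0:ℝ)..(π/2), ((√(1 - x ^ 2 * sin θ ^ 2)
          - (1 - x ^ 2) * (1 / √(1 - x ^ 2 * sin θ ^ 2))) - x ^ 2 * g' θ)
            / (x * (1 - x ^ 2)) := by
        refine integral_congr fun θ _ => ?_
        have h := one_sub_sq_mul_sin_sq_pos hx θ
        simp only [g']
        have hr := sq_sqrt h.le
        set u := 1 - x ^ 2 * sin θ ^ 2 with hu_def
        set r := √u
        have hr0 : 0 < r := sqrt_pos.2 h
        field_simp
        rw [hr, hu_def]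
        ring
    _ = _ := by
        rw [integral_div, integral_sub (hE.sub (hK.const_mul _)) (hG.const_mul _),
          integral_sub hE (hK.const_mul _), integral_const_mul, integral_const_mul, hg']
        simp [ellE, ellK]

lemma hasDerivAt_ellK {x : ℝ} (hx₀ : x ≠ 0) (hx : x ^ 2 < 1) :
    HasDerivAt ellK ((ellE x - (1 - x ^ 2) * ellK x) / (x * (1 - x ^ 2))) x :=
  integral_deriv_ellK_integrand hx₀ hx ▸ hasDerivAt_ellK_integral hx

lemma pi_div_two_le_ellK {x : ℝ} (hx : x ^ 2 < 1) : π / 2 ≤ ellK x := by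
  calc π / 2 = ∫ _ in (0:ℝ)..(π/2), (1:ℝ) := by simp
    _ ≤ ellK x := by
      refine integral_mono_on (by positivity) intervalIntegrable_const
        ((continuous_one_div_sqrt_one_sub_sq_mul_sin_sq hx).intervalIntegrable _ _) fun θ _ => ?_
      rw [le_div_iff₀ (sqrt_pos.2 (one_sub_sq_mul_sin_sq_pos hx θ)), one_mul]
      exact sqrt_le_one.2 (one_sub_sq_mul_sin_sq_le_one x θ)

lemma ellE_nonneg (x : ℝ) : 0 ≤ ellE x :=
  integral_nonneg (by positivity) fun _ _ => sqrt_nonneg _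

lemma ellE_le_pi_div_two (x : ℝ) : ellE x ≤ π / 2 := by
  calc ellE x ≤ ∫ _ in (0:ℝ)..(π/2), (1:ℝ) :=
        integral_mono_on (by positivity) (Continuous.intervalIntegrable (by fun_prop) _ _)
          intervalIntegrable_const fun θ _ => sqrt_le_one.2 (one_sub_sq_mul_sin_sq_le_one x θ)
    _ = π / 2 := by simp

lemma ellE_one : ellE 1 = 1 := by
  have h : ∀ θ ∈ uIcc 0 (π / 2), √(1 - 1 ^ 2 * sin θ ^ 2) = cos θ := fun θ hθ => by
    rw [uIcc_of_le (by positivity)] at hθ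
    rw [one_pow, one_mul, ← cos_sq',
      sqrt_sq (cos_nonneg_of_mem_Icc ⟨by linarith [pi_pos, hθ.1], hθ.2⟩)]
  rw [ellE, integral_congr h]
  simp

lemma ellK_le_of_le_cos {x t c : ℝ} (hx : x ^ 2 < 1) (ht₀ : 0 ≤ t) (ht : t ≤ π / 2)
    (hc : 0 < c) (hct : c ≤ cos t) : ellK x ≤ t / c + (π / 2 - t) / √(1 - x ^ 2) := by
  have hK := continuous_one_div_sqrt_one_sub_sq_mul_sin_sq hx
  have hk : 0 < √(1 - x ^ 2) := sqrt_pos.2 (by linarith)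
  have hnear : ∫ θ in (0:ℝ)..t, 1 / √(1 - x ^ 2 * sin θ ^ 2) ≤ ∫ _ in (0:ℝ)..t, 1 / c := by
    refine integral_mono_on ht₀ (hK.intervalIntegrable _ _) intervalIntegrable_const
      fun θ hθ => one_div_le_one_div_of_le hc ?_
    calc c ≤ cos θ := hct.trans (cos_le_cos_of_nonneg_of_le_pi hθ.1 (by linarith [pi_pos]) hθ.2)
      _ ≤ |cos θ| := le_abs_self _
      _ = √(cos θ ^ 2) := (sqrt_sq_eq_abs _).symm
      _ ≤ _ := sqrt_le_sqrt (cos_sq_le_one_sub_sq_mul_sin_sq hx.le θ)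
  have hfar : ∫ θ in t..(π/2), 1 / √(1 - x ^ 2 * sin θ ^ 2)
      ≤ ∫ _ in t..(π/2), 1 / √(1 - x ^ 2) :=
    integral_mono_on ht (hK.intervalIntegrable _ _) intervalIntegrable_const
      fun θ _ => one_div_le_one_div_of_le hk
        (sqrt_le_sqrt (one_sub_sq_le_one_sub_sq_mul_sin_sq x θ))
  rw [ellK, ← integral_add_adjacent_intervals (hK.intervalIntegrable 0 t)
    (hK.intervalIntegrable t (π/2))]
  refine (add_le_add hnear hfar).trans_eq ?_
  simp [div_eq_mul_inv]

lemma sq_ellK_mul_sqrt_le {x : ℝ} (hx : x ^ 2 < 1) : ellK x ^ 2 * √(1 - x ^ 2) ≤ π ^ 2 := by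
  set k := √(1 - x ^ 2) with hk_def
  have hk : 0 < k := sqrt_pos.2 (by linarith)
  have hk1 : k ≤ 1 := sqrt_le_one.2 (by nlinarith)
  set c := √k
  have hc : 0 < c := sqrt_pos.2 hk
  have hc1 : c ≤ 1 := sqrt_le_one.2 hk1
  have hck : c ^ 2 = k := sq_sqrt hk.le
  -- Split `ellK` at `t = π/2 (1 - c)`; Jordan's inequality gives `cos t = sin (π c / 2) ≥ c`.
  have hct : c ≤ cos (π / 2 * (1 - c)) := by
    rw [show π / 2 * (1 - c) = π / 2 - π / 2 * c by ring, cos_pi_div_two_sub]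
    have := mul_le_sin (x := π / 2 * c) (by positivity) (by nlinarith [pi_pos])
    rwa [show 2 / π * (π / 2 * c) = c by field_simp] at this
  have hK : ellK x ≤ π / c := by
    have := ellK_le_of_le_cos hx (by nlinarith [pi_pos]) (by nlinarith [pi_pos]) hc hct
    rw [← hk_def] at this
    calc ellK x ≤ _ := this
      _ = π / c - π / 2 := by rw [← hck]; field_simp; ring
      _ ≤ π / c := by linarith [pi_pos]
  have hK0 : 0 ≤ ellK x := (pi_div_two_le_ellK hx).trans' (by positivity)
  calc ellK x ^ 2 * k ≤ (π / c) ^ 2 * k := by gcongr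
    _ = π ^ 2 := by rw [div_pow, hck]; field_simp

lemma abs_ellK_sub_two_mul_ellE_le {x : ℝ} (hx : x ^ 2 < 1) :
    |ellK x - 2 * ellE x| ≤ 2 * ellK x := by
  have := pi_div_two_le_ellK hx
  have := ellE_nonneg x
  have := ellE_le_pi_div_two x
  rw [abs_le]
  constructor <;> linarith

lemma abs_ellK_mul_ellK_sub_two_mul_ellE_le {x : ℝ} (hx : x ^ 2 < 1) :
    |ellK x * (ellK x - 2 * ellE x)| ≤ 2 * π ^ 2 / √(1 - x ^ 2) := by
  have hk : 0 < √(1 - x ^ 2) := sqrt_pos.2 (by linarith)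
  have hK : 0 ≤ ellK x := (pi_div_two_le_ellK hx).trans' (by positivity)
  rw [abs_mul, abs_of_nonneg hK, le_div_iff₀ hk]
  calc ellK x * |ellK x - 2 * ellE x| * √(1 - x ^ 2)
      ≤ ellK x * (2 * ellK x) * √(1 - x ^ 2) := by
        gcongr; exact abs_ellK_sub_two_mul_ellE_le hx
    _ = 2 * (ellK x ^ 2 * √(1 - x ^ 2)) := by ring
    _ ≤ 2 * π ^ 2 := by gcongr; exact sq_ellK_mul_sqrt_le hx

noncomputable def ellPrimitive (x : ℝ) : ℝ :=
  -((1 - x ^ 2) * ellK x * (ellK x - 2 * ellE x) + ellE x ^ 2) / 2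

lemma hasDerivAt_ellPrimitive {x : ℝ} (hx₀ : x ≠ 0) (hx : x ^ 2 < 1) :
    HasDerivAt ellPrimitive (x * ellK x ^ 2 - 2 * x * ellE x * ellK x) x := by
  have hxx : 1 - x ^ 2 ≠ 0 := by linarith
  have hK := hasDerivAt_ellK hx₀ hx
  have hE := hasDerivAt_ellE hx₀ hx
  refine (((((hasDerivAt_pow 2 x).const_sub 1).mul hK).mul (hK.sub (hE.const_mul 2))).add
    (hE.pow 2)).neg.div_const 2 |>.congr_deriv ?_
  simp only [Pi.mul_apply, Pi.sub_apply]
  field_simp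
  ring

lemma continuousAt_ellPrimitive {x : ℝ} (hx : x ^ 2 < 1) : ContinuousAt ellPrimitive x := by
  have hK := continuousAt_ellK hx
  have hE := continuous_ellE.continuousAt (x := x)
  unfold ellPrimitive
  fun_prop

lemma ellPrimitive_zero : ellPrimitive 0 = 0 := by
  simp [ellPrimitive, ellK, ellE]
  ring

lemma tendsto_ellPrimitive_one : Tendsto ellPrimitive (𝓝[<] 1) (𝓝 (-1 / 2)) := by
  have hIoo : ∀ᶠ x in 𝓝[<] (1:ℝ), x ∈ Ioo (-1) 1 := Ioo_mem_nhdsLT (by norm_num)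
  have hsing :
      Tendsto (fun x => (1 - x ^ 2) * ellK x * (ellK x - 2 * ellE x)) (𝓝[<] 1) (𝓝 0) := by
    refine squeeze_zero_norm' (a := fun x => 2 * π ^ 2 * √(1 - x ^ 2)) ?_ ?_
    · filter_upwards [hIoo] with x hx
      have hx2 : x ^ 2 < 1 := by nlinarith [hx.1, hx.2]
      have hk : 0 < √(1 - x ^ 2) := sqrt_pos.2 (by linarith)
      rw [norm_eq_abs, mul_assoc, abs_mul, abs_of_nonneg (by linarith)]
      calc (1 - x ^ 2) * |ellK x * (ellK x - 2 * ellE x)|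
          ≤ (1 - x ^ 2) * (2 * π ^ 2 / √(1 - x ^ 2)) :=
            mul_le_mul_of_nonneg_left (abs_ellK_mul_ellK_sub_two_mul_ellE_le hx2) (by linarith)
        _ = 2 * π ^ 2 * ((1 - x ^ 2) / √(1 - x ^ 2)) := by ring
        _ = 2 * π ^ 2 * √(1 - x ^ 2) := by rw [div_sqrt]
    · have : Continuous fun x : ℝ => 2 * π ^ 2 * √(1 - x ^ 2) := by fun_prop
      simpa using this.continuousAt.tendsto.mono_left (nhdsWithin_le_nhds (a := 1))
  have hE : Tendsto ellE (𝓝[<] 1) (𝓝 1) := by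
    simpa only [ellE_one] using
      (continuous_ellE.tendsto 1).mono_left (nhdsWithin_le_nhds (s := Iio 1))
  have h := (hsing.add (hE.pow 2)).neg.div_const 2
  rwa [show -(0 + (1:ℝ) ^ 2) / 2 = -1 / 2 by norm_num] at h

lemma intervalIntegrable_deriv_ellPrimitive : IntervalIntegrable
    (fun x => x * ellK x ^ 2 - 2 * x * ellE x * ellK x) volume 0 1 := by
  have hbound : IntervalIntegrable (fun x => 2 * π ^ 2 * √(1 - x ^ 2)⁻¹) volume 0 1 :=
    (Polynomial.Chebyshev.intervalIntegrable_sqrt_one_sub_sq_inv.mono_set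
      (uIcc_subset_uIcc (by norm_num) (by norm_num))).const_mul _
  rw [intervalIntegrable_iff_integrableOn_Ioo_of_le zero_le_one] at hbound ⊢
  refine hbound.mono' ?_
    (MeasureTheory.ae_restrict_of_forall_mem measurableSet_Ioo fun x hx => ?_)
  · refine ContinuousOn.aestronglyMeasurable (fun x hx => ?_) measurableSet_Ioo
    have hK := continuousAt_ellK (x := x) (by nlinarith [hx.1, hx.2])
    have hE := continuous_ellE.continuousAt (x := x)
    exact ContinuousAt.continuousWithinAt (by fun_prop)
  · have hx2 : x ^ 2 < 1 := by nlinarith [hx.1, hx.2]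
    rw [norm_eq_abs, show x * ellK x ^ 2 - 2 * x * ellE x * ellK x
      = x * (ellK x * (ellK x - 2 * ellE x)) by ring, abs_mul, abs_of_pos hx.1, sqrt_inv,
      ← div_eq_mul_inv]
    calc x * |ellK x * (ellK x - 2 * ellE x)| ≤ 1 * (2 * π ^ 2 / √(1 - x ^ 2)) :=
          mul_le_mul hx.2.le (abs_ellK_mul_ellK_sub_two_mul_ellE_le hx2) (abs_nonneg _)
            zero_le_one
      _ = _ := one_mul _

theorem stmt_17 :
    (∫ x in (0:ℝ)..1, (x * ellK x ^ 2 - 2 * x * ellE x * ellK x)) = -1/2 := by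
  have hderiv : ∀ x ∈ Ioo (0:ℝ) 1,
      HasDerivAt ellPrimitive (x * ellK x ^ 2 - 2 * x * ellE x * ellK x) x :=
    fun x hx => hasDerivAt_ellPrimitive hx.1.ne' (by nlinarith [hx.1, hx.2])
  have hzero : Tendsto ellPrimitive (𝓝[>] 0) (𝓝 0) := by
    simpa only [ellPrimitive_zero] using
      (continuousAt_ellPrimitive (x := 0) (by norm_num)).tendsto.mono_left
        (nhdsWithin_le_nhds (s := Ioi 0))
  rw [integral_eq_sub_of_hasDerivAt_of_tendsto zero_lt_one hderiv
    intervalIntegrable_deriv_ellPrimitive hzero tendsto_ellPrimitive_one]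
  norm_num
end
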